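/- For λ ∈ ℝ^n and an integer r with 1 ≤ r ≤ n-1, if σ_r(λ) ≠ 0 then σ_{r-1}(λ)·σ_{r+1}(λ) < σ_r(λ)². -/

import Mathlib

/-- The k-th elementary symmetric function on ℝ^n. -/
noncomputable def esymm (n k : ℕ) (l : Fin n → ℝ) : ℝ :=
  ∑ s ∈ Finset.powersetCard k (Finset.univ : Finset (Fin n)), ∏ i ∈ s, l i

/-!
The coefficients of `P = ∏ i, (X + λᵢ)` are `coeff P j = σ_{n-j}(λ)`. The polynomial `P` is
real-rooted, and by Rolle so is each of its derivatives. For a real-rooted polynomial of degree `m`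
the three lowest coefficients satisfy `2 m a₀ a₂ ≤ (m - 1) a₁²`, by induction on the roots. Applied
to the `k`-th derivative of a real-rooted `p` of degree `n` this gives Newton's inequality
`(k + 2) (n - k) aₖ aₖ₊₂ ≤ (k + 1) (n - k - 1) aₖ₊₁²`. For `P` and `k = n - r - 1` it reads
`(n - r + 1) (r + 1) σ_{r-1} σ_{r+1} ≤ (n - r) r σ_r²`, which is strict as soon as `σ_r ≠ 0`.
-/

open Polynomial Nat

theorem newton_coeff_zero_prod_X_sub_C (s : Multiset ℝ) :
    2 * (Multiset.card s : ℝ) * ((s.map fun a => X - C a).prod.coeff 0 *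
      (s.map fun a => X - C a).prod.coeff 2) ≤
      ((Multiset.card s : ℝ) - 1) * (s.map fun a => X - C a).prod.coeff 1 ^ 2 := by
  induction s using Multiset.induction_on with
  | empty => simp [coeff_one]
  | cons a s ih =>
    rcases eq_or_ne s 0 with rfl | hs
    · simp [coeff_X]
    set f := (s.map fun a => X - C a).prod
    set m : ℝ := (Multiset.card s : ℝ)
    have hm : 1 ≤ m := Nat.one_le_cast.2 (Multiset.card_pos.2 hs)
    simp only [Multiset.map_cons, Multiset.prod_cons, Multiset.card_cons, Nat.cast_succ,
      mul_coeff_zero, coeff_X_sub_C_mul, coeff_sub, coeff_X_zero, coeff_C_zero, zero_sub]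
    -- multiplied by `m`, the slack is `(m f₀ + a f₁)²` plus `(m + 1) a²` times the slack of `ih`
    nlinarith [mul_nonneg (mul_nonneg (by linarith : 0 ≤ m + 1) (sq_nonneg a)) (sub_nonneg.2 ih),
      sq_nonneg (m * f.coeff 0 + a * f.coeff 1)]

theorem Polynomial.Splits.newton_coeff_zero {p : ℝ[X]} (hp : p.Splits) :
    2 * (p.natDegree : ℝ) * (p.coeff 0 * p.coeff 2) ≤ (p.natDegree - 1) * p.coeff 1 ^ 2 := by
  have hroots := splits_iff_card_roots.1 hp
  have hcoeff (k : ℕ) :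
      p.coeff k = p.leadingCoeff * (p.roots.map fun a => X - C a).prod.coeff k := by
    conv_lhs => rw [← C_leadingCoeff_mul_prod_multiset_X_sub_C hroots]
    exact coeff_C_mul _
  rw [hcoeff, hcoeff, hcoeff, ← hroots]
  linear_combination p.leadingCoeff ^ 2 * newton_coeff_zero_prod_X_sub_C p.roots

theorem Polynomial.Splits.derivative {p : ℝ[X]} (hp : p.Splits) : p.derivative.Splits := by
  rw [splits_iff_card_roots] at hp ⊢
  have hrolle := p.card_roots_le_derivative
  have hle := p.derivative.card_roots'
  rw [natDegree_derivative] at hle ⊢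
  omega

theorem Polynomial.Splits.iterate_derivative {p : ℝ[X]} (hp : p.Splits) (k : ℕ) :
    (Polynomial.derivative^[k] p).Splits := by
  induction k with
  | zero => exact hp
  | succ k ih => rw [Function.iterate_succ_apply']; exact ih.derivative

theorem Polynomial.natDegree_iterate_derivative_eq {R : Type*} [Semiring R] [IsAddTorsionFree R]
    (p : R[X]) (k : ℕ) : (derivative^[k] p).natDegree = p.natDegree - k := by
  induction k with
  | zero => rfl
  | succ k ih => rw [Function.iterate_succ_apply', natDegree_derivative, ih, Nat.sub_sub]

theorem Polynomial.factorial_mul_coeff_iterate_derivative {R : Type*} [Semiring R]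
    (p : R[X]) (j k : ℕ) :
    (j ! : R) * (derivative^[k] p).coeff j = (j + k)! * p.coeff (j + k) := by
  rw [coeff_iterate_derivative, nsmul_eq_mul, ← mul_assoc, ← Nat.cast_mul,
    ← Nat.factorial_mul_descFactorial (Nat.le_add_left k j), Nat.add_sub_cancel]

theorem Polynomial.Splits.newton_coeff {p : ℝ[X]} (hp : p.Splits) (k : ℕ) :
    (k + 2) * ((p.natDegree : ℝ) - k) * (p.coeff k * p.coeff (k + 2)) ≤
      (k + 1) * ((p.natDegree : ℝ) - k - 1) * p.coeff (k + 1) ^ 2 := by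
  rcases lt_or_ge p.natDegree k with hk | hk
  · simp [coeff_eq_zero_of_natDegree_lt hk,
      coeff_eq_zero_of_natDegree_lt (hk.trans (lt_add_one k))]
  set q := Polynomial.derivative^[k] p
  have hq := (hp.iterate_derivative k).newton_coeff_zero
  rw [natDegree_iterate_derivative_eq, Nat.cast_sub hk] at hq
  have h0 : q.coeff 0 = k ! * p.coeff k := by
    simpa using factorial_mul_coeff_iterate_derivative p 0 k
  have h1 : q.coeff 1 = (k + 1) * k ! * p.coeff (k + 1) := by
    simpa [add_comm 1 k, factorial_succ] using factorial_mul_coeff_iterate_derivative p 1 k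
  have h2 : 2 * q.coeff 2 = (k + 2) * (k + 1) * k ! * p.coeff (k + 2) := by
    simpa [add_comm 2 k, factorial_succ, mul_assoc, add_assoc, one_add_one_eq_two]
      using factorial_mul_coeff_iterate_derivative p 2 k
  rw [h0, h1] at hq
  refine le_of_mul_le_mul_right ?_ (by positivity : (0 : ℝ) < (k + 1) * (k ! : ℝ) ^ 2)
  linear_combination hq - (p.natDegree - k) * k ! * p.coeff k * h2

theorem Polynomial.natDegree_prod_X_add_C {R ι : Type*} [CommSemiring R] [Nontrivial R]
    [Fintype ι] (l : ι → R) : (∏ i, (X + C (l i))).natDegree = Fintype.card ι := by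
  rw [natDegree_prod_of_monic _ _ fun i _ => monic_X_add_C (l i)]
  simp

theorem coeff_prod_X_add_C_eq_esymm {n k : ℕ} (l : Fin n → ℝ) (hk : k ≤ n) :
    (∏ i, (X + C (l i))).coeff k = esymm n (n - k) l := by
  rw [Finset.prod_X_add_C_coeff _ _ (by simpa using hk)]
  simp [esymm]

/-- Strict Newton inequality when σ_r(λ) ≠ 0. -/
theorem newton_inequality_strict (n r : ℕ) (hr : 1 ≤ r) (hrn : r ≤ n - 1)
    (l : Fin n → ℝ) (hne : esymm n r l ≠ 0) :
    esymm n (r-1) l * esymm n (r+1) l < (esymm n r l) ^ 2 := by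
  obtain ⟨k, rfl⟩ : ∃ k, n = k + r + 1 := ⟨n - r - 1, by omega⟩
  have hsplits : (∏ i, (X + C (l i))).Splits := Splits.prod fun i _ => Splits.X_add_C (l i)
  have hnewton := hsplits.newton_coeff k
  rw [natDegree_prod_X_add_C, Fintype.card_fin, coeff_prod_X_add_C_eq_esymm l (by omega),
    coeff_prod_X_add_C_eq_esymm l (by omega), coeff_prod_X_add_C_eq_esymm l (by omega),
    show k + r + 1 - k = r + 1 by omega, show k + r + 1 - (k + 1) = r by omega,
    show k + r + 1 - (k + 2) = r - 1 by omega] at hnewton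
  push_cast at hnewton
  have hpos : 0 < esymm _ r l ^ 2 := by positivity
  have hfactor : (k + 1) * (r : ℝ) < (k + 2) * (r + 1) := by nlinarith
  refine lt_of_mul_lt_mul_left ?_ (by positivity : (0 : ℝ) ≤ (k + 2) * (r + 1))
  calc (k + 2) * (r + 1) * (esymm _ (r - 1) l * esymm _ (r + 1) l)
      ≤ (k + 1) * r * esymm _ r l ^ 2 := by linear_combination hnewton
    _ < (k + 2) * (r + 1) * esymm _ r l ^ 2 := by gcongr
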